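/- For parameters 0 < β < 1, t₀ > 0 and any real s₁, the lower truncation error of the RQ distribution satisfies ∫_{-∞}^{s₁} f_RQ(s) ds = 1/2 + arctan(tan(πβ/2)·tanh(β(s₁ − ln t₀)/2)) / (πβ). -/

import Mathlib

/-!
Put `a = πβ/2` and `u = β(s − ln t₀)/2`. Since
`cosh 2u + cos 2a = 2 (cos² a cosh² u + sin² a sinh² u)`, the function
`u ↦ arctan (tan a · tanh u)` has derivative `sin 2a / (cosh 2u + cos 2a)`, so by the chain rule
`1/2 + arctan (tan a · tanh u) / (πβ)` is an antiderivative of `f_RQ` in `s`. It tends to `0` at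
`−∞` because `tanh → −1` and `arctan (tan a) = a`. The integrand is nonnegative and its
antiderivative has a limit, so it is integrable on `(−∞, s₁]` and the fundamental theorem of
calculus applies.
-/

open MeasureTheory Real

/-- The Cole–Cole (RQ) distribution of relaxation times in the variable `s = ln t`. -/
noncomputable def fRQ (β t₀ : ℝ) (s : ℝ) : ℝ :=
  Real.sin (β * π) / (2 * π * (Real.cosh (β * (s - Real.log t₀)) + Real.cos (β * π)))

open Filter Set Topology

theorem hasDerivAt_tanh (x : ℝ) : HasDerivAt tanh (1 / cosh x ^ 2) x := by
  have h := (hasDerivAt_sinh x).fun_div (hasDerivAt_cosh x) (cosh_pos x).ne'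
  rw [show (tanh : ℝ → ℝ) = fun y => sinh y / cosh y from funext tanh_eq_sinh_div_cosh]
  refine h.congr_deriv ?_
  linear_combination (cosh_sq_sub_sinh_sq x) / cosh x ^ 2

theorem tendsto_tanh_atBot : Tendsto tanh atBot (𝓝 (-1)) := by
  have hexp : Tendsto (fun x => exp (2 * x)) atBot (𝓝 0) :=
    tendsto_exp_atBot.comp (tendsto_id.const_mul_atBot two_pos)
  have h := (hexp.sub_const 1).div (hexp.add_const 1) (by norm_num)
  rw [zero_sub, zero_add, div_one] at h
  refine h.congr fun x => ?_
  dsimp only [Pi.div_apply]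
  rw [tanh_eq_sinh_div_cosh, sinh_eq, cosh_eq, exp_neg, two_mul, exp_add]
  field_simp

theorem hasDerivAt_arctan_tan_mul_tanh {a : ℝ} (ha : cos a ≠ 0) (u : ℝ) :
    HasDerivAt (fun u => arctan (tan a * tanh u))
      (sin (2 * a) / (cosh (2 * u) + cos (2 * a))) u := by
  have hden : cosh (2 * u) + cos (2 * a) =
      2 * (cos a ^ 2 * cosh u ^ 2 + sin a ^ 2 * sinh u ^ 2) := by
    rw [cosh_two_mul, cos_two_mul]
    linear_combination (-2 * sinh u ^ 2) * sin_sq_add_cos_sq a +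
      (1 - 2 * cos a ^ 2) * cosh_sq_sub_sinh_sq u
  have hpos : 0 < cos a ^ 2 * cosh u ^ 2 + sin a ^ 2 * sinh u ^ 2 := by
    have := cosh_pos u
    positivity
  convert ((hasDerivAt_tanh u).const_mul (tan a)).arctan using 1
  rw [hden, sin_two_mul, tan_eq_sin_div_cos, tanh_eq_sinh_div_cosh]
  field_simp

theorem integrableOn_Iic_deriv_of_nonneg {g g' : ℝ → ℝ} {a l : ℝ}
    (hderiv : ∀ x ∈ Iic a, HasDerivAt g (g' x) x) (g'pos : ∀ x ∈ Iic a, 0 ≤ g' x)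
    (hg : Tendsto g atBot (𝓝 l)) : IntegrableOn g' (Iic a) := by
  have hint : ∀ i, IntegrableOn g' (Ioc i a) := by
    intro i
    rcases le_or_gt i a with hi | hi
    · exact intervalIntegral.integrableOn_deriv_of_nonneg
        (fun x hx => (hderiv x hx.2).continuousAt.continuousWithinAt)
        (fun x hx => hderiv x hx.2.le) (fun x hx => g'pos x hx.2.le)
    · simp [Ioc_eq_empty_of_le hi.le]
  refine integrableOn_Iic_of_intervalIntegral_norm_tendsto (g a - l) a hint tendsto_id ?_
  refine (hg.const_sub (g a)).congr' ?_
  filter_upwards [Iic_mem_atBot a] with i (hi : i ≤ a)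
  have hIcc : ∀ x ∈ uIcc i a, x ≤ a := fun x hx => (uIcc_of_le hi ▸ hx).2
  calc g a - g i = ∫ x in i..a, g' x :=
        (intervalIntegral.integral_eq_sub_of_hasDerivAt (fun x hx => hderiv x (hIcc x hx))
          ((intervalIntegrable_iff_integrableOn_Ioc_of_le hi).2 (hint i))).symm
    _ = ∫ x in i..a, ‖g' x‖ :=
        intervalIntegral.integral_congr fun x hx => (norm_of_nonneg (g'pos x (hIcc x hx))).symm

noncomputable def cdfRQ (β t₀ s : ℝ) : ℝ :=
  1 / 2 + arctan (tan (π * β / 2) * tanh (β * (s - log t₀) / 2)) / (π * β)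

section RQ

variable {β : ℝ} (t₀ : ℝ)

theorem cos_pi_mul_half_pos (hβ₀ : 0 < β) (hβ₁ : β < 1) : 0 < cos (π * β / 2) :=
  cos_pos_of_mem_Ioo ⟨by nlinarith [pi_pos], by nlinarith [pi_pos]⟩

theorem cosh_add_cos_mul_pi_pos (hβ₀ : 0 < β) (hβ₁ : β < 1) (x : ℝ) :
    0 < cosh x + cos (β * π) := by
  have hcos : cos π < cos (β * π) :=
    cos_lt_cos_of_nonneg_of_le_pi (by positivity) le_rfl (by nlinarith [pi_pos])
  linarith [one_le_cosh x, cos_pi]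

theorem hasDerivAt_cdfRQ (hβ₀ : 0 < β) (hβ₁ : β < 1) (s : ℝ) :
    HasDerivAt (cdfRQ β t₀) (fRQ β t₀ s) s := by
  have hlin : HasDerivAt (fun s => β * (s - log t₀) / 2) (β / 2) s := by
    simpa using (((hasDerivAt_id s).sub_const (log t₀)).const_mul β).div_const 2
  have h := (((hasDerivAt_arctan_tan_mul_tanh (cos_pi_mul_half_pos hβ₀ hβ₁).ne' _).comp s
    hlin).div_const (π * β)).const_add (1 / 2)
  refine h.congr_deriv ?_
  have hD := cosh_add_cos_mul_pi_pos hβ₀ hβ₁ (β * (s - log t₀))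
  rw [fRQ, show 2 * (π * β / 2) = β * π by ring,
    show 2 * (β * (s - log t₀) / 2) = β * (s - log t₀) by ring]
  field_simp

theorem tendsto_cdfRQ_atBot (hβ₀ : 0 < β) (hβ₁ : β < 1) :
    Tendsto (cdfRQ β t₀) atBot (𝓝 0) := by
  have hlin : Tendsto (fun s => β * (s - log t₀) / 2) atBot atBot :=
    ((tendsto_atBot_add_const_right _ _ tendsto_id).const_mul_atBot hβ₀).atBot_div_const two_pos
  have h := (((continuous_arctan.tendsto _).comp ((tendsto_tanh_atBot.comp hlin).const_mul
    (tan (π * β / 2)))).div_const (π * β)).const_add (1 / 2)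
  have hlim : 1 / 2 + arctan (tan (π * β / 2) * -1) / (π * β) = 0 := by
    rw [mul_neg_one, arctan_neg, arctan_tan (by nlinarith [pi_pos]) (by nlinarith [pi_pos])]
    field_simp
    ring
  rwa [hlim] at h

theorem fRQ_nonneg (hβ₀ : 0 < β) (hβ₁ : β < 1) (s : ℝ) : 0 ≤ fRQ β t₀ s :=
  div_nonneg (sin_nonneg_of_nonneg_of_le_pi (by positivity) (by nlinarith [pi_pos]))
    (mul_pos (by positivity) (cosh_add_cos_mul_pi_pos hβ₀ hβ₁ _)).le

end RQ

theorem fRQ_lower_truncation_general (β t₀ s₁ : ℝ) (hβ₀ : 0 < β) (hβ₁ : β < 1) :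
    ∫ s in Set.Iic s₁, fRQ β t₀ s =
      1 / 2 + Real.arctan (Real.tan (π * β / 2) *
        Real.tanh (β * (s₁ - Real.log t₀) / 2)) / (π * β) := by
  have hderiv := fun s (_ : s ∈ Iic s₁) => hasDerivAt_cdfRQ t₀ hβ₀ hβ₁ s
  have hlim := tendsto_cdfRQ_atBot t₀ hβ₀ hβ₁
  have hint :=
    integrableOn_Iic_deriv_of_nonneg hderiv (fun s _ => fRQ_nonneg t₀ hβ₀ hβ₁ s) hlim
  rw [integral_Iic_of_hasDerivAt_of_tendsto' hderiv hint hlim, sub_zero, cdfRQ]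

/-- **Lower truncation error of the RQ distribution.**
For `0 < β < 1`, `t₀ > 0` and any `s₁`,
`∫_{-∞}^{s₁} f_RQ(s) ds = 1/2 + arctan(tan(πβ/2) tanh(β(s₁ − ln t₀)/2))/(πβ)`. -/
theorem fRQ_lower_truncation (β t₀ s₁ : ℝ) (hβ₀ : 0 < β) (hβ₁ : β < 1) (ht₀ : 0 < t₀) :
    ∫ s in Set.Iic s₁, fRQ β t₀ s =
      1 / 2 + Real.arctan (Real.tan (π * β / 2) *
        Real.tanh (β * (s₁ - Real.log t₀) / 2)) / (π * β) :=
  fRQ_lower_truncation_general β t₀ s₁ hβ₀ hβ₁
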